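/- arXiv:1009.4047 — 4 statements merged into one kernel-verified Lean document; each statement's English description precedes it below -/
import Mathlib

section
/- If a permutation τ ∈ S_n has cycle type with k_i cycles of length i for each i, then its square τ² has cycle type with, for each odd i, k_i cycles of length i coming from the odd cycles of length i, and additionally for each i, 2·k_{2i} cycles of length i coming from even cycles of length 2i. Consequently, a permutation σ is a square in S_n if and only if for every even integer 2i, the number of cycles of σ of length 2i is even. -/
open Equiv Equiv.Perm Multiset

variable {α : Type*} [Fintype α] [DecidableEq α]

-- odd cycle: square is a cycle of same length
lemma sq_cycleType_odd {c : Perm α} (hc : c.IsCycle) (h : Odd c.support.card) :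
    (c ^ 2).cycleType = {c.support.card} := by
  have h2 : 2 ≤ c.support.card := hc.two_le_card_support
  have h3 : 3 ≤ c.support.card := by
    rcases h with ⟨k, hk⟩; omega
  have hcop : Nat.Coprime 2 (orderOf c) := by
    rw [hc.orderOf, Nat.coprime_comm, Nat.coprime_two_right]
    exact h
  have hcyc : (c ^ 2).IsCycle := hc.pow_iff.mpr hcop
  have hsupp : (c ^ 2).support = c.support := by
    rw [hc.support_pow_eq_iff, hc.orderOf]
    intro hd
    exact absurd (Nat.le_of_dvd (by norm_num) hd) (by omega)
  rw [hcyc.cycleType, hsupp]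

-- even cycle of length 2m, m ≥ 2 : square has type {m, m}
lemma sq_cycleType_even {c : Perm α} (hc : c.IsCycle) {m : ℕ} (hm : 2 ≤ m)
    (h : c.support.card = 2 * m) : (c ^ 2).cycleType = Multiset.replicate 2 m := by
  have horder : orderOf c = 2 * m := by rw [hc.orderOf, h]
  have hsupp : (c ^ 2).support = c.support := by
    rw [hc.support_pow_eq_iff, horder]
    intro hd
    exact absurd (Nat.le_of_dvd (by norm_num) hd) (by omega)
  have hall : ∀ a ∈ (c ^ 2).cycleType, a = m := by
    intro a ha
    rw [cycleType_def, Multiset.mem_map] at ha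
    obtain ⟨g, hg, rfl⟩ := ha
    rw [Finset.mem_val] at hg
    have hgmem := hg
    rw [mem_cycleFactorsFinset_iff] at hgmem
    obtain ⟨hgc, -⟩ := hgmem
    obtain ⟨x, hx, -⟩ := hgc
    have hxs : x ∈ g.support := mem_support.mpr hx
    have hgeq : g = (c ^ 2).cycleOf x := cycle_is_cycleOf hxs hg
    have hc2x : (c ^ 2) x ≠ x := by
      have := (mem_cycleFactorsFinset_iff.mp hg).2 x hxs
      rw [← this]; exact hx
    have hcx : c x ≠ x := by
      intro hcx
      exact hc2x (by simp [pow_succ, hcx])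
    have hdc : g.IsCycle := (mem_cycleFactorsFinset_iff.mp hg).1
    have hgx : g x ≠ x := hx
    -- compute orderOf g = m
    have hpow : ∀ k : ℕ, (g ^ k) x = (c ^ (2 * k)) x := by
      intro k
      rw [hgeq, cycleOf_pow_apply_self, ← pow_mul]
    have hdvd1 : orderOf g ∣ m := by
      apply orderOf_dvd_of_pow_eq_one
      rw [hdc.pow_eq_one_iff' hgx, hpow, ← horder, pow_orderOf_eq_one, one_apply]
    have hdvd2 : m ∣ orderOf g := by
      have h1 : (c ^ (2 * orderOf g)) x = x := by
        rw [← hpow, pow_orderOf_eq_one, one_apply]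
      have h2 : c ^ (2 * orderOf g) = 1 := (hc.pow_eq_one_iff' hcx).mpr h1
      have h3 : 2 * m ∣ 2 * orderOf g := by
        rw [← horder]; exact orderOf_dvd_of_pow_eq_one h2
      exact (mul_dvd_mul_iff_left (two_ne_zero)).mp h3
    simp only [Function.comp_apply]
    rw [← hdc.orderOf]
    exact Nat.dvd_antisymm hdvd1 hdvd2
  have hrep := Multiset.eq_replicate_card.mpr hall
  have hsum : (c ^ 2).cycleType.sum = 2 * m := by
    rw [sum_cycleType, hsupp, h]
  rw [hrep] at hsum ⊢
  rw [Multiset.sum_replicate, smul_eq_mul] at hsum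
  congr 1
  have hm0 : 0 < m := by omega
  exact Nat.eq_of_mul_eq_mul_right hm0 (by omega)

lemma count_sq_cycle {c : Perm α} (hc : c.IsCycle) {i : ℕ} (hi : 2 ≤ i) :
    (c ^ 2).cycleType.count i =
      (if Odd i then c.cycleType.count i else 0) + 2 * c.cycleType.count (2 * i) := by
  have h2 : 2 ≤ c.support.card := hc.two_le_card_support
  have hct : c.cycleType = {c.support.card} := hc.cycleType
  rcases Nat.even_or_odd c.support.card with he | ho
  · -- even length
    obtain ⟨m, hm⟩ := he
    have hm' : c.support.card = 2 * m := by omega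
    rcases Nat.lt_or_ge m 2 with hm2 | hm2
    · -- m = 1, c ^ 2 = 1
      have hm1 : m = 1 := by omega
      have hord : orderOf c = 2 := by rw [hc.orderOf, hm', hm1]
      have : c ^ 2 = 1 := by rw [← hord, pow_orderOf_eq_one]
      rw [this, cycleType_one, hct]
      simp only [Multiset.count_zero, Multiset.count_singleton]
      have e2 : ¬ (2 * i = c.support.card) := by omega
      rw [if_neg e2]
      by_cases hoi : Odd i
      · have e1 : ¬ (i = c.support.card) := by rcases hoi with ⟨k, hk⟩; omega
        rw [if_pos hoi, if_neg e1]
      · rw [if_neg hoi]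
    · rw [sq_cycleType_even hc hm2 hm', hct]
      rw [Multiset.count_replicate]
      simp only [Multiset.count_singleton]
      by_cases him : i = m
      · subst him
        have e1 : ¬ (i = c.support.card) := by omega
        have e2 : (2 * i = c.support.card) := by omega
        rw [if_pos rfl, if_neg e1, if_pos e2]
        split_ifs <;> simp
      · have e2 : ¬ (2 * i = c.support.card) := by omega
        rw [if_neg (Ne.symm him), if_neg e2]
        by_cases hoi : Odd i
        · have e1 : ¬ (i = c.support.card) := by
            intro hh; rw [hh] at hoi; rw [hm'] at hoi; exact (Nat.not_odd_iff_even.mpr ⟨m, by omega⟩) hoi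
          rw [if_pos hoi, if_neg e1]
        · rw [if_neg hoi]
  · -- odd length
    rw [sq_cycleType_odd hc ho, hct]
    simp only [Multiset.count_singleton]
    have e2 : ¬ (2 * i = c.support.card) := by
      intro hh; rw [← hh] at ho; exact (Nat.not_odd_iff_even.mpr ⟨i, by omega⟩) ho
    rw [if_neg e2]
    by_cases him : i = c.support.card
    · subst him
      simp [ho]
    · rw [if_neg him]
      split_ifs <;> simp [him]

lemma count_sq (τ : Perm α) (i : ℕ) (hi : 2 ≤ i) :
    (τ ^ 2).cycleType.count i =
      (if Odd i then τ.cycleType.count i else 0) + 2 * τ.cycleType.count (2 * i) := by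
  induction τ using cycle_induction_on with
  | base_one => simp
  | base_cycles c hc => exact count_sq_cycle hc hi
  | induction_disjoint σ τ hd hc hσ hτ =>
    have hcomm : Commute σ τ := hd.commute
    have hsq : (σ * τ) ^ 2 = σ ^ 2 * τ ^ 2 := hcomm.mul_pow 2
    have hd2 : Equiv.Perm.Disjoint (σ ^ 2) (τ ^ 2) := hd.pow_disjoint_pow 2 2
    rw [hsq, hd2.cycleType_mul, hd.cycleType_mul]
    simp only [Multiset.count_add]
    rw [hσ, hτ]
    split_ifs <;> ring

lemma sq_root_exists {σ : Perm α} (h : ∀ i : ℕ, Even i → Even (σ.cycleType.count i)) :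
    ∃ τ : Perm α, τ ^ 2 = σ := by
  classical
  set M := σ.cycleType with hM
  set F := M.toFinset.filter (fun a => Even a) with hF
  set K := ∑ a ∈ F, Multiset.replicate (M.count a / 2) a with hK
  have hKc : ∀ j, K.count j = if Even j then M.count j / 2 else 0 := by
    intro j
    rw [hK, Multiset.count_sum']
    simp only [Multiset.count_replicate]
    rw [Finset.sum_ite_eq' F j (fun a => M.count a / 2)]
    by_cases hj : Even j
    · rw [if_pos hj]
      by_cases hjm : j ∈ F
      · rw [if_pos hjm]
      · rw [if_neg hjm]
        have : j ∉ M.toFinset := by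
          intro hh; exact hjm (Finset.mem_filter.mpr ⟨hh, hj⟩)
        rw [Multiset.mem_toFinset] at this
        rw [Multiset.count_eq_zero_of_notMem this]
        omega
    · rw [if_neg hj, if_neg]
      intro hh
      exact hj (Finset.mem_filter.mp hh).2
  set M' := M.filter (fun a => Odd a) + K.map (fun a => 2 * a) with hM'
  have hinj : Function.Injective (fun a : ℕ => 2 * a) := fun a b hab => by
    simpa using hab
  have hM'odd : ∀ i, Odd i → M'.count i = M.count i := by
    intro i hoi
    rw [hM', Multiset.count_add, Multiset.count_filter, if_pos hoi]
    have : i ∉ K.map (fun a => 2 * a) := by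
      intro hh
      rw [Multiset.mem_map] at hh
      obtain ⟨a, -, ha⟩ := hh
      rcases hoi with ⟨k, hk⟩; omega
    rw [Multiset.count_eq_zero_of_notMem this]
    omega
  have hM'dbl : ∀ i, M'.count (2 * i) = if Even i then M.count i / 2 else 0 := by
    intro i
    rw [hM', Multiset.count_add, Multiset.count_filter]
    have hne : ¬ Odd (2 * i) := by simp [Nat.even_iff, Nat.odd_iff, Nat.mul_mod_right]
    rw [if_neg hne, Multiset.count_map_eq_count' _ _ hinj, hKc, zero_add]
  have hKK : K + K = M.filter (fun a => Even a) := by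
    ext j
    rw [Multiset.count_add, hKc, Multiset.count_filter]
    by_cases hj : Even j
    · rw [if_pos hj, if_pos hj]
      obtain ⟨k, hk⟩ := h j hj
      omega
    · rw [if_neg hj, if_neg hj]
  have hsum : M'.sum ≤ Fintype.card α := by
    have h1 : (K.map (fun a => 2 * a)).sum = K.sum + K.sum := by
      rw [Multiset.sum_map_mul_left, Multiset.map_id', two_mul]
    have h2 : M'.sum = (M.filter (fun a => Odd a)).sum + (M.filter (fun a => Even a)).sum := by
      rw [hM', Multiset.sum_add, h1, ← Multiset.sum_add, hKK]
    have h3 : M.filter (fun a => Even a) = M.filter (fun a => ¬ Odd a) := by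
      apply Multiset.filter_congr
      intro x _
      rw [Nat.not_odd_iff_even]
    rw [h2, h3, ← Multiset.sum_add, Multiset.filter_add_not, hM, sum_cycleType]
    exact Finset.card_le_univ _
  have h2le : ∀ a ∈ M', 2 ≤ a := by
    intro a ha
    rw [hM', Multiset.mem_add] at ha
    rcases ha with ha | ha
    · exact two_le_of_mem_cycleType (Multiset.mem_filter.mp ha).1
    · rw [Multiset.mem_map] at ha
      obtain ⟨b, hb, rfl⟩ := ha
      have hbc : K.count b ≠ 0 := by
        rw [Multiset.count_ne_zero]; exact hb
      rw [hKc] at hbc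
      by_cases hbe : Even b
      · rw [if_pos hbe] at hbc
        have : M.count b ≠ 0 := by omega
        rw [Multiset.count_ne_zero] at this
        have := two_le_of_mem_cycleType (hM ▸ this)
        omega
      · rw [if_neg hbe] at hbc; omega
  obtain ⟨τ, hτ⟩ := (Equiv.Perm.exists_with_cycleType_iff α).mpr ⟨hsum, h2le⟩
  have hτ2 : (τ ^ 2).cycleType = σ.cycleType := by
    ext i
    rcases Nat.lt_or_ge i 2 with hi | hi
    · rw [Multiset.count_eq_zero_of_notMem, Multiset.count_eq_zero_of_notMem]
      · intro hh; have := two_le_of_mem_cycleType hh; omega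
      · intro hh; have := two_le_of_mem_cycleType hh; omega
    · rw [count_sq τ i hi, hτ, hM'dbl i]
      by_cases ho : Odd i
      · rw [if_pos ho, hM'odd i ho, if_neg (by rwa [Nat.not_even_iff_odd])]
        rw [← hM]
        omega
      · have he : Even i := Nat.not_odd_iff_even.mp ho
        rw [if_neg ho, if_pos he, zero_add]
        obtain ⟨k, hk⟩ := h i he
        rw [← hM]
        omega
  have hconj : IsConj (τ ^ 2) σ := isConj_of_cycleType_eq hτ2
  rw [isConj_iff] at hconj
  obtain ⟨g, hg⟩ := hconj
  refine ⟨g * τ * g⁻¹, ?_⟩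
  have : (g * τ * g⁻¹) ^ 2 = g * τ ^ 2 * g⁻¹ := by
    simp [pow_two, mul_assoc]
  rw [this, hg]

theorem cycleType_of_square (n : ℕ) :
    (∀ (τ : Equiv.Perm (Fin n)) (i : ℕ), 2 ≤ i →
        (τ ^ 2).cycleType.count i =
          (if Odd i then τ.cycleType.count i else 0) + 2 * τ.cycleType.count (2 * i)) ∧
    (∀ σ : Equiv.Perm (Fin n),
        (∃ τ : Equiv.Perm (Fin n), τ ^ 2 = σ) ↔
          ∀ i : ℕ, Even i → Even (σ.cycleType.count i)) := by
  constructor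
  · exact fun τ i hi => count_sq τ i hi
  · intro σ
    constructor
    · rintro ⟨τ, rfl⟩ i hie
      rcases Nat.lt_or_ge i 2 with hi | hi
      · rw [Multiset.count_eq_zero_of_notMem]
        · exact Even.zero
        · intro hh; have := two_le_of_mem_cycleType hh; omega
      · rw [count_sq τ i hi, if_neg (by rwa [Nat.not_odd_iff_even]), zero_add]
        exact even_two_mul _
    · exact sq_root_exists
end

section
/- As n → ∞, the ratio I_{n-k}/I_n of numbers of involutions satisfies I_{n-k}/I_n ~ n^{-k/2}; more precisely, for fixed k, lim_{n→∞} n^{k/2} · I_{n-k}/I_n = 1. -/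
/-!
Removing one point from an involution on `n + 2` points (it is either fixed or swapped with
one of the other `n + 1` points) gives `I (n + 2) = I (n + 1) + (n + 1) * I n`. So the ratio
`r n = I (n + 1) / I n` satisfies `r (n + 1) = 1 + (n + 1) / r n`, which keeps it between
`√(n + 1)` and `√(n + 1) + 1`; hence `r n ~ √n`. Since `I (m + k) / I m` is the product of the
`k` ratios `r (m + i)`, `i < k`, each `~ √m`, it is `~ m ^ (k / 2) ~ (m + k) ^ (k / 2)`.
-/

open Filter

/-- The number of involutions in the symmetric group `S_n`. -/
noncomputable def numInvolutions (n : ℕ) : ℕ :=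
  Nat.card {σ : Equiv.Perm (Fin n) // σ * σ = 1}

open Equiv Finset

namespace Equiv.Perm

variable {α β : Type*}

def involutionsCongr (e : α ≃ β) :
    {σ : Perm α // σ * σ = 1} ≃ {σ : Perm β // σ * σ = 1} :=
  e.permCongr.subtypeEquiv fun σ => by
    rw [← permCongrHom_coe, ← map_mul, MulEquiv.map_eq_one_iff]

theorem card_involutions [Fintype α] :
    Nat.card {σ : Perm α // σ * σ = 1} = numInvolutions (Fintype.card α) :=
  Nat.card_congr (involutionsCongr (Fintype.equivFin α))

theorem optionCongr_mul (σ τ : Perm α) :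
    (σ * τ).optionCongr = σ.optionCongr * τ.optionCongr :=
  optionCongr_trans τ σ

variable [DecidableEq α]

def involutionsFixingEquiv (a : α) :
    {σ : Perm α // σ * σ = 1 ∧ σ a = a} ≃ {σ : Perm {x // x ≠ a} // σ * σ = 1} :=
  calc {σ : Perm α // σ * σ = 1 ∧ σ a = a}
    _ ≃ {σ : {σ : Perm α // ∀ x, ¬x ≠ a → σ x = x} // σ.1 * σ.1 = 1} :=
      (subtypeEquivRight fun σ => by simp [and_comm]).trans
        (subtypeSubtypeEquivSubtypeInter (fun σ : Perm α => ∀ x, ¬x ≠ a → σ x = x)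
          (fun σ => σ * σ = 1)).symm
    _ ≃ _ := ((Perm.subtypeEquivSubtypePerm _).subtypeEquiv fun σ => by
      change _ ↔ ofSubtype σ * ofSubtype σ = 1
      rw [← map_mul, map_eq_one_iff _ ofSubtype_injective]).symm

theorem commute_swap_none_optionCongr {x : Option α} {τ : Perm α} (hx : ∀ a ∈ x, τ a = a) :
    Commute (swap none x) τ.optionCongr := by
  have : τ.optionCongr x = x := by cases x <;> simp_all
  rw [Commute, SemiconjBy, mul_swap_eq_swap_mul, optionCongr_apply, Option.map_none, this]

theorem decomposeOption_symm_mul_self {x : Option α} {τ : Perm α} (hx : ∀ a ∈ x, τ a = a) :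
    decomposeOption.symm (x, τ) * decomposeOption.symm (x, τ) = (τ * τ).optionCongr := by
  rw [decomposeOption_symm_apply, (commute_swap_none_optionCongr hx).symm.mul_mul_mul_comm,
    swap_mul_self, one_mul, optionCongr_mul]

theorem fixes_of_decomposeOption_symm_mul_self_eq_one {x : Option α} {τ : Perm α}
    (h : decomposeOption.symm (x, τ) * decomposeOption.symm (x, τ) = 1) :
    ∀ a ∈ x, τ a = a := by
  rintro a rfl
  have h_none := congrArg (· none) h
  by_contra hτa
  simp [swap_apply_of_ne_of_ne, hτa] at h_none

theorem decomposeOption_symm_mul_self_eq_one_iff (x : Option α) (τ : Perm α) :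
    decomposeOption.symm (x, τ) * decomposeOption.symm (x, τ) = 1 ↔
      τ * τ = 1 ∧ ∀ a ∈ x, τ a = a := by
  refine ⟨fun h => ?_, fun ⟨hτ, hx⟩ => ?_⟩
  · have hx := fixes_of_decomposeOption_symm_mul_self_eq_one h
    refine ⟨?_, hx⟩
    rw [decomposeOption_symm_mul_self hx] at h
    exact optionCongr_injective (h.trans optionCongr_one.symm)
  · rw [decomposeOption_symm_mul_self hx, hτ, optionCongr_one]

theorem card_involutions_option [Fintype α] :
    Nat.card {σ : Perm (Option α) // σ * σ = 1} =
      Nat.card {σ : Perm α // σ * σ = 1} +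
        ∑ a, Nat.card {σ : Perm α // σ * σ = 1 ∧ σ a = a} := by
  have e : {σ : Perm (Option α) // σ * σ = 1} ≃
      Σ x : Option α, {τ : Perm α // τ * τ = 1 ∧ ∀ a ∈ x, τ a = a} :=
    (decomposeOption.symm.subtypeEquiv fun p =>
      (decomposeOption_symm_mul_self_eq_one_iff p.1 p.2).symm).symm.trans
      (subtypeProdEquivSigmaSubtype fun (x : Option α) (τ : Perm α) =>
        τ * τ = 1 ∧ ∀ a ∈ x, τ a = a)
  rw [Nat.card_congr e, Nat.card_sigma, Fintype.sum_option]
  simp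

end Equiv.Perm

theorem numInvolutions_add_two (n : ℕ) :
    numInvolutions (n + 2) = numInvolutions (n + 1) + (n + 1) * numInvolutions n := by
  have h := Perm.card_involutions_option (α := Fin (n + 1))
  simp only [Perm.card_involutions, Fintype.card_option, Fintype.card_fin] at h
  have h_fix (a : Fin (n + 1)) :
      Nat.card {σ : Perm (Fin (n + 1)) // σ * σ = 1 ∧ σ a = a} = numInvolutions n := by
    rw [Nat.card_congr (Perm.involutionsFixingEquiv a), Perm.card_involutions]
    simp
  rw [h, Finset.sum_congr rfl fun a _ => h_fix a]
  simp

theorem numInvolutions_one : numInvolutions 1 = numInvolutions 0 := by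
  have h := Perm.card_involutions_option (α := Fin 0)
  rw [Perm.card_involutions, Perm.card_involutions] at h
  simpa using h

theorem numInvolutions_pos (n : ℕ) : 0 < numInvolutions n :=
  have : Nonempty {σ : Perm (Fin n) // σ * σ = 1} := ⟨⟨1, one_mul 1⟩⟩
  Nat.card_pos

open Real

noncomputable def involutionRatio (n : ℕ) : ℝ :=
  numInvolutions (n + 1) / numInvolutions n

theorem involutionRatio_pos (n : ℕ) : 0 < involutionRatio n := by
  unfold involutionRatio
  exact div_pos (mod_cast numInvolutions_pos _) (mod_cast numInvolutions_pos _)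

theorem involutionRatio_zero : involutionRatio 0 = 1 := by
  simp [involutionRatio, numInvolutions_one, (numInvolutions_pos 0).ne']

theorem involutionRatio_succ (n : ℕ) :
    involutionRatio (n + 1) = 1 + (n + 1) / involutionRatio n := by
  have h_pos : (numInvolutions (n + 1) : ℝ) ≠ 0 := mod_cast (numInvolutions_pos _).ne'
  simp only [involutionRatio, numInvolutions_add_two]
  push_cast
  rw [add_div, div_self h_pos, div_div_eq_mul_div]

theorem sqrt_sq_add_one_le_one_add_sq_div {s : ℝ} (hs : 0 ≤ s) :
    √(s ^ 2 + 1) ≤ 1 + s ^ 2 / (s + 1) := by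
  rw [sqrt_le_iff]
  refine ⟨by positivity, ?_⟩
  rw [one_add_div (by positivity), div_pow, le_div_iff₀ (by positivity)]
  nlinarith [sq_nonneg s, pow_nonneg hs 3]

theorem sqrt_le_involutionRatio_le (n : ℕ) :
    √((n : ℝ) + 1) ≤ involutionRatio n ∧ involutionRatio n ≤ √((n : ℝ) + 1) + 1 := by
  induction n with
  | zero => simp [involutionRatio_zero]
  | succ n ih =>
    set s := √((n : ℝ) + 1) with hs
    have hs0 : 0 < s := sqrt_pos.2 (by positivity)
    have hr0 : 0 < involutionRatio n := involutionRatio_pos n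
    have hsq : (n : ℝ) + 1 = s ^ 2 := by rw [hs, sq_sqrt (by positivity)]
    have hu : √(((n + 1 : ℕ) : ℝ) + 1) = √(s ^ 2 + 1) := by rw [← hsq]; push_cast; ring_nf
    rw [involutionRatio_succ, hu, hsq]
    constructor
    · calc √(s ^ 2 + 1) ≤ 1 + s ^ 2 / (s + 1) := sqrt_sq_add_one_le_one_add_sq_div hs0.le
        _ ≤ 1 + s ^ 2 / involutionRatio n := by gcongr; exact ih.2
    · calc 1 + s ^ 2 / involutionRatio n ≤ 1 + s ^ 2 / s := by gcongr; exact ih.1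
        _ = s + 1 := by field_simp; ring
        _ ≤ √(s ^ 2 + 1) + 1 := by gcongr; exact le_sqrt_of_sq_le (by linarith)

open Asymptotics

theorem isEquivalent_sqrt_natCast_add (c : ℕ) :
    (fun n : ℕ => √((n + c : ℕ) : ℝ)) ~[atTop] fun n => √(n : ℝ) := by
  refine (isEquivalent_of_tendsto_one ?_).symm
  have h := (tendsto_natCast_div_add_atTop (c : ℝ)).sqrt
  rw [sqrt_one] at h
  refine h.congr fun n => ?_
  simp [sqrt_div (Nat.cast_nonneg _)]

theorem isEquivalent_involutionRatio : involutionRatio ~[atTop] fun n => √(n : ℝ) := by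
  have h_bdd :
      (fun n => involutionRatio n - √((n + 1 : ℕ) : ℝ)) =O[atTop] fun _ => (1 : ℝ) := by
    refine IsBigO.of_bound 1 (Eventually.of_forall fun n => ?_)
    obtain ⟨h_lo, h_hi⟩ := sqrt_le_involutionRatio_le n
    rw [norm_one, mul_one, Real.norm_eq_abs, abs_le]
    push_cast
    constructor <;> linarith
  have h_sqrt : (fun n : ℕ => √((n + 1 : ℕ) : ℝ)) ~[atTop] fun n => √(n : ℝ) :=
    isEquivalent_sqrt_natCast_add 1
  refine IsEquivalent.trans ?_ h_sqrt
  refine h_bdd.trans_isLittleO ((isLittleO_one_left_iff ℝ).2 ?_)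
  exact tendsto_norm_atTop_atTop.comp
    (tendsto_sqrt_atTop.comp (tendsto_natCast_atTop_atTop.comp (tendsto_add_atTop_nat 1)))

theorem numInvolutions_add (m k : ℕ) :
    (numInvolutions (m + k) : ℝ) =
      numInvolutions m * ∏ i ∈ range k, involutionRatio (m + i) := by
  induction k with
  | zero => simp
  | succ k ih =>
    have h_pos : (numInvolutions (m + k) : ℝ) ≠ 0 := mod_cast (numInvolutions_pos _).ne'
    rw [prod_range_succ, ← mul_assoc, ← ih, involutionRatio, mul_div_cancel₀ _ h_pos]
    rfl

theorem involution_ratio_asymptotics (k : ℕ) :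
    Tendsto
      (fun n : ℕ =>
        (n : ℝ) ^ ((k : ℝ) / 2) * (numInvolutions (n - k) : ℝ) / (numInvolutions n : ℝ))
      atTop (nhds 1) := by
  rw [← tendsto_add_atTop_iff_nat k]
  have h_prod :
      (fun m => ∏ i ∈ range k, involutionRatio (m + i)) ~[atTop] fun m => √(m : ℝ) ^ k := by
    simpa using IsEquivalent.finsetProd (s := range k) fun i _ =>
      (isEquivalent_involutionRatio.comp_tendsto (tendsto_add_atTop_nat i)).trans
        (isEquivalent_sqrt_natCast_add i)
  have h_pow :
      (fun m : ℕ => ((m + k : ℕ) : ℝ) ^ ((k : ℝ) / 2)) ~[atTop]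
        fun m => √(m : ℝ) ^ k := by
    refine ((isEquivalent_sqrt_natCast_add k).pow k).congr_left (Eventually.of_forall fun m => ?_)
    simp only [Pi.pow_apply, rpow_div_two_eq_sqrt _ (Nat.cast_nonneg (m + k)), rpow_natCast]
  refine ((isEquivalent_iff_tendsto_one ?_).mp (h_pow.trans h_prod.symm)).congr fun m => ?_
  · exact Eventually.of_forall fun m => (prod_pos fun i _ => involutionRatio_pos _).ne'
  · simp [numInvolutions_add, div_mul_eq_div_div, (numInvolutions_pos m).ne']
end

section
/- The Cauchy transform of Wigner's semicircle law is G(z) = (z − √(z²−4))/2: for z outside [−2,2] (e.g., real z > 2), ∫_{−2}^{2} (z−s)^{−1} √(4−s²)/(2π) ds = (z − √(z²−4))/2. -/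
/-!
For `r < z` the function `s ↦ √(r² - s²) / (z - s)` has the elementary primitive
`z · arcsin (s / r) - √(r² - s²) + √(z² - r²) · arcsin ((r² - z s) / (r (z - s)))`.
The Möbius map `s ↦ (r² - z s) / (r (z - s))` sends `[-r, r]` onto `[-1, 1]` reversing
orientation, so evaluating the primitive at the endpoints gives `π (z - √(z² - r²))`;
dividing by `2π` at `r = 2` yields the Cauchy transform of the semicircle law.
-/

open Real Set

lemma one_sub_sq_moebius_eq {r z s : ℝ} (hr : r ≠ 0) (hzs : z ≠ s) :
    1 - ((r ^ 2 - z * s) / (r * (z - s))) ^ 2 =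
      (z ^ 2 - r ^ 2) * (r ^ 2 - s ^ 2) / (r * (z - s)) ^ 2 := by
  have : z - s ≠ 0 := sub_ne_zero.mpr hzs
  field_simp
  ring

lemma hasDerivAt_arcsin_div {r s : ℝ} (hr : 0 < r) (hs : s ∈ Ioo (-r) r) :
    HasDerivAt (fun x => arcsin (x / r)) (1 / √(r ^ 2 - s ^ 2)) s := by
  have hA : 0 < r ^ 2 - s ^ 2 := by nlinarith [hs.1, hs.2]
  have h₁ : s / r ≠ -1 := by
    rw [Ne, div_eq_iff hr.ne']; linarith [hs.1]
  have h₂ : s / r ≠ 1 := by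
    rw [Ne, div_eq_iff hr.ne']; linarith [hs.2]
  refine ((hasDerivAt_arcsin h₁ h₂).comp s ((hasDerivAt_id s).div_const r)).congr_deriv ?_
  have hsq : 1 - (s / r) ^ 2 = (r ^ 2 - s ^ 2) / r ^ 2 := by field_simp
  rw [hsq, sqrt_div hA.le, sqrt_sq hr.le]
  field_simp

lemma hasDerivAt_arcsin_moebius {r z s : ℝ} (hr : 0 < r) (hrz : r < z)
    (hs : s ∈ Ioo (-r) r) :
    HasDerivAt (fun x => arcsin ((r ^ 2 - z * x) / (r * (z - x))))
      (-√(z ^ 2 - r ^ 2) / ((z - s) * √(r ^ 2 - s ^ 2))) s := by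
  have hzs : s < z := by linarith [hs.2]
  have hzs' : 0 < z - s := sub_pos.mpr hzs
  have hA : 0 < r ^ 2 - s ^ 2 := by nlinarith [hs.1, hs.2]
  have hB : 0 < z ^ 2 - r ^ 2 := by nlinarith
  have hu : 0 < 1 - ((r ^ 2 - z * s) / (r * (z - s))) ^ 2 := by
    rw [one_sub_sq_moebius_eq hr.ne' hzs.ne']
    positivity
  have h₁ : (r ^ 2 - z * s) / (r * (z - s)) ≠ -1 := by
    intro h; rw [h] at hu; norm_num at hu
  have h₂ : (r ^ 2 - z * s) / (r * (z - s)) ≠ 1 := by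
    intro h; rw [h] at hu; norm_num at hu
  have hnum : HasDerivAt (fun x => r ^ 2 - z * x) (-z) s := by
    simpa using ((hasDerivAt_id s).const_mul z).const_sub (r ^ 2)
  have hden : HasDerivAt (fun x => r * (z - x)) (-r) s := by
    simpa using ((hasDerivAt_id s).const_sub z).const_mul r
  refine ((hasDerivAt_arcsin h₁ h₂).comp s (hnum.div hden (by positivity))).congr_deriv ?_
  rw [one_sub_sq_moebius_eq hr.ne' hzs.ne', sqrt_div (by positivity), sqrt_mul hB.le,
    sqrt_sq (by positivity)]
  have hBpos : 0 < √(z ^ 2 - r ^ 2) := sqrt_pos.mpr hB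
  have hApos : 0 < √(r ^ 2 - s ^ 2) := sqrt_pos.mpr hA
  field_simp
  linear_combination sq_sqrt hB.le

noncomputable def semicirclePrimitive (r z s : ℝ) : ℝ :=
  z * arcsin (s / r) - √(r ^ 2 - s ^ 2) +
    √(z ^ 2 - r ^ 2) * arcsin ((r ^ 2 - z * s) / (r * (z - s)))

lemma hasDerivAt_semicirclePrimitive {r z s : ℝ} (hr : 0 < r) (hrz : r < z)
    (hs : s ∈ Ioo (-r) r) :
    HasDerivAt (semicirclePrimitive r z) (√(r ^ 2 - s ^ 2) / (z - s)) s := by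
  have hzs : 0 < z - s := by linarith [hs.2]
  have hA : 0 < r ^ 2 - s ^ 2 := by nlinarith [hs.1, hs.2]
  have hB : 0 < z ^ 2 - r ^ 2 := by nlinarith
  have hsqrt : HasDerivAt (fun x => √(r ^ 2 - x ^ 2))
      (-(2 * s) / (2 * √(r ^ 2 - s ^ 2))) s := by
    have : HasDerivAt (fun x => r ^ 2 - x ^ 2) (-(2 * s)) s := by
      simpa using (hasDerivAt_pow 2 s).const_sub (r ^ 2)
    exact this.sqrt hA.ne'
  refine ((((hasDerivAt_arcsin_div hr hs).const_mul z).sub hsqrt).add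
    ((hasDerivAt_arcsin_moebius hr hrz hs).const_mul _)).congr_deriv ?_
  have hApos : 0 < √(r ^ 2 - s ^ 2) := sqrt_pos.mpr hA
  field_simp
  linear_combination -sq_sqrt hB.le - sq_sqrt hA.le

lemma continuousOn_semicirclePrimitive {r z : ℝ} (hr : 0 < r) (hrz : r < z) :
    ContinuousOn (semicirclePrimitive r z) (Icc (-r) r) := by
  have hden : ∀ s ∈ Icc (-r) r, r * (z - s) ≠ 0 := fun s hs =>
    mul_ne_zero hr.ne' (by linarith [hs.2])
  unfold semicirclePrimitive
  fun_prop (disch := assumption)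

lemma semicirclePrimitive_right {r z : ℝ} (hr : 0 < r) (hrz : r < z) :
    semicirclePrimitive r z r = (z - √(z ^ 2 - r ^ 2)) * (π / 2) := by
  have hu : (r ^ 2 - z * r) / (r * (z - r)) = -1 := by
    rw [div_eq_iff (by nlinarith)]; ring
  rw [semicirclePrimitive, div_self hr.ne', hu]
  simp only [arcsin_one, sub_self, sqrt_zero, sub_zero, arcsin_neg, mul_neg]
  ring

lemma semicirclePrimitive_left {r z : ℝ} (hr : 0 < r) (hrz : r < z) :
    semicirclePrimitive r z (-r) = -(z - √(z ^ 2 - r ^ 2)) * (π / 2) := by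
  have hu : (r ^ 2 - z * -r) / (r * (z - -r)) = 1 := by
    rw [div_eq_iff (by nlinarith)]; ring
  rw [semicirclePrimitive, neg_div, div_self hr.ne', hu]
  simp only [arcsin_neg, arcsin_one, mul_neg, even_two, Even.neg_pow, sub_self, sqrt_zero,
    sub_zero]
  ring

theorem integral_sqrt_sq_sub_sq_div_sub {r z : ℝ} (hr : 0 < r) (hrz : r < z) :
    ∫ s in -r..r, √(r ^ 2 - s ^ 2) / (z - s) = π * (z - √(z ^ 2 - r ^ 2)) := by
  have hint : IntervalIntegrable (fun s => √(r ^ 2 - s ^ 2) / (z - s))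
      MeasureTheory.volume (-r) r := by
    refine ContinuousOn.intervalIntegrable ?_
    have : ∀ s ∈ uIcc (-r) r, z - s ≠ 0 := fun s hs => by
      rw [uIcc_of_le (by linarith)] at hs; linarith [hs.2]
    fun_prop (disch := assumption)
  rw [intervalIntegral.integral_eq_sub_of_hasDerivAt_of_le (by linarith)
      (continuousOn_semicirclePrimitive hr hrz)
      (fun s hs => hasDerivAt_semicirclePrimitive hr hrz hs) hint,
    semicirclePrimitive_right hr hrz, semicirclePrimitive_left hr hrz]
  ring

theorem semicircle_cauchy_transform (z : ℝ) (hz : 2 < z) :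
    (∫ s in (-2 : ℝ)..2, (z - s)⁻¹ * (Real.sqrt (4 - s ^ 2) / (2 * Real.pi))) =
      (z - Real.sqrt (z ^ 2 - 4)) / 2 := by
  have h := integral_sqrt_sq_sub_sq_div_sub two_pos hz
  rw [show (2 : ℝ) ^ 2 = 4 by norm_num] at h
  calc (∫ s in (-2 : ℝ)..2, (z - s)⁻¹ * (√(4 - s ^ 2) / (2 * π)))
      = (∫ s in (-2 : ℝ)..2, √(4 - s ^ 2) / (z - s)) / (2 * π) := by
        rw [← intervalIntegral.integral_div]; congr 1 with s; ring
    _ = (z - √(z ^ 2 - 4)) / 2 := by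
        rw [h]; field_simp
end

section
/- For any even integers k ≥ 2 and m ≥ 2, Σ_{p=0}^{m/2} (m!/((m−2p)!·p!)) · (k/2)^p · f(k, m−2p) = k^{m/2} · m!/(m/2)!, where f(k, r) = (r!/(r/2)!)·(k/2)^{r/2} if r is even and f(k, r) = 0 if r is odd; equivalently this sum equals (2k)^{m/2}·(m−1)!!. -/
/-- `f(k,r)` for even `k`: the number of ways of completely matching `r` cycles of
length `k` and choosing roots, `f(k,r) = (r!/(r/2)!)·(k/2)^{r/2}` for even `r`,
and `0` for odd `r`. -/
noncomputable def fEven (k r : ℕ) : ℚ :=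
  if Even r then ((r.factorial : ℚ) / ((r / 2).factorial : ℚ)) * ((k : ℚ) / 2) ^ (r / 2)
  else 0

/-!
Writing `m = 2n`, only the even arguments `2(n - p)` of `f` occur, and the `p`-th summand
collapses to `(2n)!/n! · (n choose p) · (k/2)^n`. Summing over `p` gives the factor `2^n`,
hence `k^n (2n)!/n!`; the second identity is `(2n)! = 2^n n! (2n-1)!!`.
-/

open Nat

theorem Nat.factorial_two_mul_eq_mul_doubleFactorial (n : ℕ) :
    (2 * n)! = 2 ^ n * n ! * (2 * n - 1)‼ := by
  cases n with
  | zero => rfl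
  | succ n =>
    rw [show 2 * (n + 1) - 1 = 2 * n + 1 by omega, show 2 * (n + 1) = 2 * n + 1 + 1 by ring,
      factorial_eq_mul_doubleFactorial, show 2 * n + 1 + 1 = 2 * (n + 1) by ring,
      doubleFactorial_two_mul]

theorem fEven_two_mul (k r : ℕ) :
    fEven k (2 * r) = ((2 * r)! : ℚ) / r ! * ((k : ℚ) / 2) ^ r := by
  rw [fEven, if_pos (even_two_mul r), Nat.mul_div_cancel_left r two_pos]

theorem even_moment_summand_eq {k n p : ℕ} (hp : p ≤ n) :
    ((2 * n)! : ℚ) / ((2 * n - 2 * p)! * p !) * ((k : ℚ) / 2) ^ p * fEven k (2 * n - 2 * p) =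
      ((2 * n)! : ℚ) / n ! * n.choose p * ((k : ℚ) / 2) ^ n := by
  rw [← Nat.mul_sub, fEven_two_mul, Nat.cast_choose ℚ hp,
    ← Nat.add_sub_cancel' hp, pow_add, Nat.add_sub_cancel_left]
  field_simp

theorem even_moment_sum_eq (k n : ℕ) :
    ∑ p ∈ Finset.range (n + 1),
        ((2 * n)! : ℚ) / ((2 * n - 2 * p)! * p !) * ((k : ℚ) / 2) ^ p * fEven k (2 * n - 2 * p) =
      (k : ℚ) ^ n * (2 * n)! / n ! := by
  have hchoose : ∑ p ∈ Finset.range (n + 1), (n.choose p : ℚ) = 2 ^ n := by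
    exact_mod_cast Nat.sum_range_choose n
  calc _ = ∑ p ∈ Finset.range (n + 1), ((2 * n)! : ℚ) / n ! * n.choose p * ((k : ℚ) / 2) ^ n :=
        Finset.sum_congr rfl fun p hp =>
          even_moment_summand_eq (Nat.lt_succ_iff.mp (Finset.mem_range.mp hp))
    _ = ((2 * n)! : ℚ) / n ! * 2 ^ n * ((k : ℚ) / 2) ^ n := by
        rw [← Finset.sum_mul, ← Finset.mul_sum, hchoose]
    _ = (k : ℚ) ^ n * (2 * n)! / n ! := by
        rw [div_pow]
        field_simp

theorem even_moment_sum_general (k m : ℕ) (hm : Even m) :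
    (∑ p ∈ Finset.range (m / 2 + 1),
        ((m.factorial : ℚ) / (((m - 2 * p).factorial : ℚ) * (p.factorial : ℚ))) *
          ((k : ℚ) / 2) ^ p * fEven k (m - 2 * p)) =
      (k : ℚ) ^ (m / 2) * (m.factorial : ℚ) / ((m / 2).factorial : ℚ) ∧
    (k : ℚ) ^ (m / 2) * (m.factorial : ℚ) / ((m / 2).factorial : ℚ) =
      (2 * (k : ℚ)) ^ (m / 2) * ((m - 1).doubleFactorial : ℚ) := by
  obtain ⟨n, rfl⟩ := hm
  rw [← two_mul, Nat.mul_div_cancel_left n two_pos]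
  refine ⟨even_moment_sum_eq k n, ?_⟩
  rw [factorial_two_mul_eq_mul_doubleFactorial]
  push_cast
  field_simp
  ring

theorem even_moment_sum (k m : ℕ) (hk : Even k) (hm : Even m) (hk2 : 2 ≤ k) (hm2 : 2 ≤ m) :
    (∑ p ∈ Finset.range (m / 2 + 1),
        ((m.factorial : ℚ) / (((m - 2 * p).factorial : ℚ) * (p.factorial : ℚ))) *
          ((k : ℚ) / 2) ^ p * fEven k (m - 2 * p)) =
      (k : ℚ) ^ (m / 2) * (m.factorial : ℚ) / ((m / 2).factorial : ℚ) ∧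
    (k : ℚ) ^ (m / 2) * (m.factorial : ℚ) / ((m / 2).factorial : ℚ) =
      (2 * (k : ℚ)) ^ (m / 2) * ((m - 1).doubleFactorial : ℚ) :=
  even_moment_sum_general k m hm
end
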